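/- If a graph G is obtained from a graph H by a ΔY-transformation (replacing the edges of a triangle uvw of H by a new vertex y joined to u, v, w) and G contains K_6 as a minor, then H contains K_6 as a minor. -/

import Mathlib

open Set Topology

noncomputable section

universe u v

section Curves

variable {S : Type u} [TopologicalSpace S]

/-- A simple closed curve: the injective continuous image of a circle. -/
def IsSCC (γ : Set S) : Prop :=
  ∃ f : C(AddCircle (1 : ℝ), S), Function.Injective f ∧ Set.range f = γ

/-- A simple arc from `a` to `b`. -/
def IsArcFromTo (α : Set S) (a b : S) : Prop :=
  ∃ f : C(unitInterval, S), Function.Injective f ∧ Set.range f = α ∧ f 0 = a ∧ f 1 = b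

/-- A curve (set) separates the ambient space if its complement is disconnected. -/
def CurveSeparates (γ : Set S) : Prop := ¬ IsPreconnected (γᶜ)

/-- A simple closed curve is contractible (null-homotopic). -/
def CurveNullhomotopic (γ : Set S) : Prop :=
  ∃ f : C(AddCircle (1 : ℝ), S), Function.Injective f ∧ Set.range f = γ ∧
    ∃ p : S, f.Homotopic (ContinuousMap.const _ p)

/-- Two closed curves are freely homotopic. -/
def FreelyHomotopic (γ₁ γ₂ : Set S) : Prop :=
  ∃ f g : C(AddCircle (1 : ℝ), S), Set.range f = γ₁ ∧ Set.range g = γ₂ ∧ f.Homotopic g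

/-- An open disk in `S`. -/
def IsOpenDisk (D : Set S) : Prop := IsOpen D ∧ Nonempty (D ≃ₜ (ℝ × ℝ))

end Curves

/-- A (closed) surface: a compact connected Hausdorff space, locally homeomorphic to `ℝ²`. -/
def IsSurface (S : Type u) [TopologicalSpace S] : Prop :=
  CompactSpace S ∧ ConnectedSpace S ∧ T2Space S ∧
    ∀ x : S, ∃ U : Set S, IsOpen U ∧ x ∈ U ∧ Nonempty (U ≃ₜ (ℝ × ℝ))

/-- `S` is a topological sphere. -/
def IsSphere (S : Type u) [TopologicalSpace S] : Prop :=
  Nonempty (S ≃ₜ Metric.sphere (0 : EuclideanSpace ℝ (Fin 3)) 1)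

/-- `S` is a projective plane: the quotient of the 2-sphere by the antipodal identification. -/
def IsProjectivePlane (S : Type u) [TopologicalSpace S] : Prop :=
  Nonempty (S ≃ₜ Quot (fun x y : Metric.sphere (0 : EuclideanSpace ℝ (Fin 3)) 1 =>
    (x : EuclideanSpace ℝ (Fin 3)) = - (y : EuclideanSpace ℝ (Fin 3))))

/-- `H` is a minor of `G`: branch decomposition formulation. -/
def IsMinorOf {W : Type*} {V : Type*} (H : SimpleGraph W) (G : SimpleGraph V) : Prop :=
  ∃ f : W → Set V, (∀ w, (f w).Nonempty) ∧ (∀ w, (G.induce (f w)).Connected) ∧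
    (Pairwise fun w w' => Disjoint (f w) (f w')) ∧
    ∀ ⦃w w'⦄, H.Adj w w' → ∃ u ∈ f w, ∃ u' ∈ f w', G.Adj u u'

/-- `G` contains the complete graph `K₆` as a minor. -/
def HasK6Minor {V : Type*} (G : SimpleGraph V) : Prop :=
  IsMinorOf (SimpleGraph.completeGraph (Fin 6)) G

/-- `G` is 3-connected. -/
def IsThreeConnected {V : Type*} (G : SimpleGraph V) : Prop :=
  Nonempty (Fin 4 ↪ V) ∧ ∀ s : Set V, s.Finite → s.ncard < 3 → (G.induce sᶜ).Connected

/-- An embedding of a simple graph `G` into a topological space `S`: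
vertices are embedded injectively as points, edges as internally disjoint arcs. -/
structure GraphEmbedding (V : Type v) (G : SimpleGraph V) (S : Type u)
    [TopologicalSpace S] where
  vpos : V → S
  vpos_inj : Function.Injective vpos
  earc : Sym2 V → Set S
  earc_arc : ∀ u w : V, G.Adj u w → IsArcFromTo (earc s(u, w)) (vpos u) (vpos w)
  earc_vert : ∀ u w : V, G.Adj u w → earc s(u, w) ∩ Set.range vpos = {vpos u, vpos w}
  earc_disj : ∀ e e', e ∈ G.edgeSet → e' ∈ G.edgeSet → e ≠ e' →
    earc e ∩ earc e' ⊆ Set.range vpos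

namespace GraphEmbedding

variable {V : Type v} {G : SimpleGraph V} {S : Type u} [TopologicalSpace S]

/-- The point set of the embedded graph. -/
def carrier (E : GraphEmbedding V G S) : Set S :=
  Set.range E.vpos ∪ ⋃ e ∈ G.edgeSet, E.earc e

/-- The (open) faces of the embedding: connected components of the complement. -/
def IsFaceOf (E : GraphEmbedding V G S) (F : Set S) : Prop :=
  ∃ x, x ∉ E.carrier ∧ F = connectedComponentIn E.carrierᶜ x

/-- The boundary (facial walk, as a point set) of a face. -/
def wall (E : GraphEmbedding V G S) (F : Set S) : Set S := closure F \ F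

/-- Face-width: the minimum number of intersection points of a non-contractible
simple closed curve with the graph. -/
noncomputable def faceWidth (E : GraphEmbedding V G S) : ℕ∞ :=
  ⨅ γ ∈ {γ : Set S | IsSCC γ ∧ ¬ CurveNullhomotopic γ}, (γ ∩ E.carrier).encard

/-- Non-separating face-width: the minimum number of intersection points of a
surface non-separating simple closed curve with the graph. -/
noncomputable def nsFaceWidth (E : GraphEmbedding V G S) : ℕ∞ :=
  ⨅ γ ∈ {γ : Set S | IsSCC γ ∧ ¬ CurveSeparates γ}, (γ ∩ E.carrier).encard

/-- The point set of an embedded walk. -/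
def walkImage (E : GraphEmbedding V G S) {u w : V} (p : G.Walk u w) : Set S :=
  E.vpos '' {x | x ∈ p.support} ∪ ⋃ e ∈ p.edges, E.earc e

end GraphEmbedding

/-- An `(S₁, S₂)`-path in `G` with all vertices in `A`: meets `S₁` only in its first
vertex and `S₂` only in its last vertex. -/
def IsPathBetweenSets {V : Type v} (G : SimpleGraph V) (S1 S2 A : Set V)
    {u w : V} (p : G.Walk u w) : Prop :=
  p.IsPath ∧ u ∈ S1 ∧ w ∈ S2 ∧ (∀ x ∈ p.support, x ∈ A) ∧
    (∀ x ∈ p.support, x ∈ S1 → x = u) ∧ (∀ x ∈ p.support, x ∈ S2 → x = w)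

/-- There are `n` pairwise disjoint `(S₁,S₂)`-paths in `G` with vertices in `A`. -/
def DisjointPathFamily {V : Type v} (G : SimpleGraph V) (S1 S2 A : Set V) (n : ℕ) : Prop :=
  ∃ (u w : Fin n → V) (P : ∀ i, G.Walk (u i) (w i)),
    (∀ i, IsPathBetweenSets G S1 S2 A (P i)) ∧
    Pairwise fun i j => Disjoint {x | x ∈ (P i).support} {x | x ∈ (P j).support}

/-- `(A, B)` are the (vertex sets of the) two arcs of a cycle subgraph `C` obtained by
deleting the vertices `x` and `y`. -/
def IsArcPair {V : Type v} {G : SimpleGraph V} (C : G.Subgraph) (x y : V)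
    (A B : Set V) : Prop :=
  A ∪ B = C.verts \ {x, y} ∧ Disjoint A B ∧ (∀ a ∈ A, ∀ b ∈ B, ¬ C.Adj a b) ∧
    (A = ∅ ∨ (C.induce A).Connected) ∧ (B = ∅ ∨ (C.induce B).Connected)

/-- `dist_{(C,S)}(x,y) ≥ d`. -/
def CycDistGE {V : Type v} {G : SimpleGraph V} (C : G.Subgraph) (Sset : Set V)
    (x y : V) (d : ℕ) : Prop :=
  ∀ A B, IsArcPair C x y A B → (d : ℕ∞) ≤ (A ∩ Sset).encard ∧ (d : ℕ∞) ≤ (B ∩ Sset).encard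

/-- `dist_{(C,S)}(x,y) = 0`. -/
def CycDistEqZero {V : Type v} {G : SimpleGraph V} (C : G.Subgraph) (Sset : Set V)
    (x y : V) : Prop :=
  ∃ A B, IsArcPair C x y A B ∧ (A ∩ Sset = ∅ ∨ B ∩ Sset = ∅)

/-- The cylinder `S¹ × [0,1]`. -/
abbrev Cyl : Type := AddCircle (1 : ℝ) × unitInterval

def cuff0 : Set Cyl := {p | p.2 = 0}

def cuff1 : Set Cyl := {p | p.2 = 1}

/-- A ΔY-transformation: `G` is obtained from `H` by deleting the edges of the triangle
`uvw` and joining a new (previously isolated) vertex `y` to `u`, `v` and `w`. -/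
def IsDeltaY {V : Type v} (H G : SimpleGraph V) (u v w y : V) : Prop :=
  H.Adj u v ∧ H.Adj v w ∧ H.Adj u w ∧ (∀ z, ¬ H.Adj y z) ∧ y ∉ ({u, v, w} : Set V) ∧
    G = SimpleGraph.fromEdgeSet
      ((H.edgeSet \ {s(u, v), s(v, w), s(u, w)}) ∪ {s(y, u), s(y, v), s(y, w)})

/-- A face-chain of length `n`: an alternating sequence of vertices/edges
`x₀,…,xₙ` (given by their point sets) and faces `F₀,…,F_{n-1}`, with `xᵢ, xᵢ₊₁`
incident to `Fᵢ`. -/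
structure FaceChain {V : Type v} {G : SimpleGraph V} {S : Type u} [TopologicalSpace S]
    (E : GraphEmbedding V G S) (n : ℕ) where
  pts : Fin (n + 1) → Set S
  faces : Fin n → Set S
  faces_mem : ∀ i, E.IsFaceOf (faces i)
  pts_mem : ∀ j, (∃ x, pts j = {E.vpos x}) ∨ ∃ a b, G.Adj a b ∧ pts j = E.earc s(a, b)
  incid_left : ∀ i : Fin n, pts i.castSucc ⊆ closure (faces i)
  incid_right : ∀ i : Fin n, pts i.succ ⊆ closure (faces i)

namespace FaceChain

variable {V : Type v} {G : SimpleGraph V} {S : Type u} [TopologicalSpace S]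
  {E : GraphEmbedding V G S} {n : ℕ}

/-- The face-chain is closed: `x₀ = xₙ`. -/
def IsClosedChain (Λ : FaceChain E n) : Prop := Λ.pts 0 = Λ.pts (Fin.last n)

/-- `γ` is a realization of the closed curve `Γ(Λ)`. -/
def Realizes (Λ : FaceChain E n) (γ : Set S) : Prop :=
  IsSCC γ ∧ γ ⊆ (⋃ i, closure (Λ.faces i)) ∧ γ ∩ E.carrier ⊆ ⋃ j, Λ.pts j

/-- The face-chain is surface non-separating: some realization of `Γ(Λ)` is
surface non-separating. -/
def NonSep (Λ : FaceChain E n) : Prop := ∃ γ, Λ.Realizes γ ∧ ¬ CurveSeparates γ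

/-- `Λ` is a closed surface non-separating face-chain of minimum length among all
closed surface non-separating face-chains. -/
def MinimalNonSepClosed (Λ : FaceChain E n) : Prop :=
  Λ.IsClosedChain ∧ Λ.NonSep ∧
    ∀ (m : ℕ) (Λ' : FaceChain E m), Λ'.IsClosedChain → Λ'.NonSep → n ≤ m

end FaceChain

/-- `E'` (an embedding of `G'` in `S'`) is obtained from `E` (an embedding of `G` in `S`)
by cutting `S` along the curve `γ` and capping off the two resulting cuffs with disks. -/
structure CutCap {V V' : Type v} {S S' : Type u} [TopologicalSpace S] [TopologicalSpace S']
    {G : SimpleGraph V} {G' : SimpleGraph V'} (E : GraphEmbedding V G S) (γ : Set S)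
    (E' : GraphEmbedding V' G' S') where
  D₁ : Set S'
  D₂ : Set S'
  disk₁ : IsOpenDisk D₁
  disk₂ : IsOpenDisk D₂
  disj : Disjoint (closure D₁) (closure D₂)
  homeo : (γᶜ : Set S) ≃ₜ (((closure D₁ ∪ closure D₂)ᶜ : Set S'))
  graph_eq : E'.carrier = closure (Subtype.val '' (homeo '' (Subtype.val ⁻¹' E.carrier)))
  bdry : frontier D₁ ∪ frontier D₂ ⊆ E'.carrier

end

/-! Contracting a connected branch set containing `y` onto a neighbour `u₀ ∈ {u, v, w}` of `y`
keeps a minor model intact: every edge of `G` at `y` becomes an edge of the triangle `uvw` of `H`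
or collapses. If `y`'s branch set is `{y}` alone, the other five branch sets of a `K₆` model would
need five disjoint neighbours of `y`, but `y` has only three. -/

section MinorModel

variable {X V W : Type*} {K : SimpleGraph X} {G : SimpleGraph V} {H : SimpleGraph W}

structure IsMinorModel (K : SimpleGraph X) (G : SimpleGraph V) (f : X → Set V) : Prop where
  nonempty : ∀ i, (f i).Nonempty
  connected : ∀ i, (G.induce (f i)).Connected
  pairwise_disjoint : Pairwise fun i j => Disjoint (f i) (f j)
  exists_adj : ∀ ⦃i j⦄, K.Adj i j → ∃ a ∈ f i, ∃ b ∈ f j, G.Adj a b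

theorem isMinorOf_iff_exists_isMinorModel :
    IsMinorOf K G ↔ ∃ f, IsMinorModel K G f :=
  ⟨fun ⟨f, h₁, h₂, h₃, h₄⟩ => ⟨f, h₁, h₂, h₃, h₄⟩,
    fun ⟨f, h₁, h₂, h₃, h₄⟩ => ⟨f, h₁, h₂, h₃, h₄⟩⟩

variable {φ : V → W}

theorem reachable_induce_image (hφ : ∀ a b, G.Adj a b → φ a = φ b ∨ H.Adj (φ a) (φ b))
    {s : Set V} {a b : s} (hab : (G.induce s).Reachable a b) :
    (H.induce (φ '' s)).Reachable
      ⟨φ a, mem_image_of_mem φ a.2⟩ ⟨φ b, mem_image_of_mem φ b.2⟩ := by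
  obtain ⟨p⟩ := hab
  induction p with
  | nil => rfl
  | @cons x z _ hxz _ ih =>
    refine SimpleGraph.Reachable.trans ?_ ih
    rcases hφ x z hxz with heq | hadj
    · simp only [heq]
      rfl
    · exact SimpleGraph.Adj.reachable (G := H.induce (φ '' s)) hadj

theorem connected_induce_image (hφ : ∀ a b, G.Adj a b → φ a = φ b ∨ H.Adj (φ a) (φ b))
    {s : Set V} (hs : (G.induce s).Connected) : (H.induce (φ '' s)).Connected := by
  obtain ⟨⟨a, ha⟩⟩ := hs.nonempty
  refine (SimpleGraph.connected_iff _).mpr ⟨?_, ⟨⟨φ a, mem_image_of_mem φ ha⟩⟩⟩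
  rintro ⟨_, a, ha, rfl⟩ ⟨_, b, hb, rfl⟩
  exact reachable_induce_image hφ (hs.preconnected ⟨a, ha⟩ ⟨b, hb⟩)

theorem IsMinorModel.image {f : X → Set V} (hf : IsMinorModel K G f)
    (hφ : ∀ a b, G.Adj a b → φ a = φ b ∨ H.Adj (φ a) (φ b))
    (hdisj : Pairwise fun i j => Disjoint (φ '' f i) (φ '' f j)) :
    IsMinorModel K H fun i => φ '' f i := by
  refine ⟨fun i => (hf.nonempty i).image φ, fun i => connected_induce_image hφ (hf.connected i),
    hdisj, fun i j hij => ?_⟩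
  obtain ⟨a, ha, b, hb, hab⟩ := hf.exists_adj hij
  have hne : φ a ≠ φ b :=
    Set.disjoint_left.mp (hdisj hij.ne) (mem_image_of_mem φ ha) ∘ (· ▸ mem_image_of_mem φ hb)
  exact ⟨φ a, mem_image_of_mem φ ha, φ b, mem_image_of_mem φ hb,
    (hφ a b hab).resolve_left hne⟩

theorem exists_adj_of_connected_induce {s : Set V} (hs : (G.induce s).Connected)
    {y a : V} (hy : y ∈ s) (ha : a ∈ s) (hay : a ≠ y) : ∃ z ∈ s, G.Adj y z := by
  have : Nontrivial s :=
    ⟨⟨⟨y, hy⟩, ⟨a, ha⟩, fun h => hay (congrArg Subtype.val h).symm⟩⟩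
  obtain ⟨z, hz⟩ := hs.preconnected.exists_adj_of_nontrivial ⟨y, hy⟩
  exact ⟨z, z.2, hz⟩

theorem IsMinorModel.card_le_of_subset_singleton [Fintype X] [DecidableEq X]
    {f : X → Set V} (hf : IsMinorModel (⊤ : SimpleGraph X) G f) {i₀ : X} {y : V}
    (hy : f i₀ ⊆ {y}) {N : Finset V} (hN : ∀ z, G.Adj y z → z ∈ N) :
    Fintype.card X ≤ N.card + 1 := by
  have hnbr : ∀ j, j ≠ i₀ → ∃ b ∈ f j, G.Adj y b := by
    intro j hj
    obtain ⟨a, ha, b, hb, hab⟩ := hf.exists_adj hj.symm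
    exact ⟨b, hb, hy ha ▸ hab⟩
  have : Nonempty V := ⟨y⟩
  choose! b hbf hby using hnbr
  have hinj : Set.InjOn b ((Finset.univ.erase i₀ : Finset X) : Set X) := by
    intro i hi j hj hij
    by_contra hne
    exact Set.disjoint_left.mp (hf.pairwise_disjoint hne) (hbf i (Finset.ne_of_mem_erase hi))
      (hij ▸ hbf j (Finset.ne_of_mem_erase hj))
  have := Finset.card_le_card_of_injOn b
    (fun i hi => hN _ (hby i (Finset.ne_of_mem_erase hi))) hinj
  rw [Finset.card_erase_of_mem (Finset.mem_univ _), Finset.card_univ] at this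
  omega

end MinorModel

theorem image_update_id_subset {V : Type*} [DecidableEq V] {s : Set V} {y u₀ : V}
    (h : y ∈ s → u₀ ∈ s) : Function.update id y u₀ '' s ⊆ s := by
  rintro _ ⟨a, ha, rfl⟩
  rcases eq_or_ne a y with rfl | hay
  · simpa using h ha
  · simpa [Function.update_of_ne hay] using ha

namespace IsDeltaY

variable {V : Type*} {H G : SimpleGraph V} {u v w y : V}

theorem adj_of_ne (h : IsDeltaY H G u v w y) {a b : V} (ha : a ≠ y) (hb : b ≠ y)
    (hab : G.Adj a b) : H.Adj a b := by
  obtain ⟨-, -, -, -, -, rfl⟩ := h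
  obtain ⟨hmem | hmem, -⟩ := (SimpleGraph.fromEdgeSet_adj _).mp hab
  · exact hmem.1
  · simp only [Set.mem_insert_iff, Set.mem_singleton_iff, Sym2.eq_iff] at hmem
    aesop

theorem mem_of_adj (h : IsDeltaY H G u v w y) {z : V} (hz : G.Adj y z) :
    z ∈ ({u, v, w} : Set V) := by
  obtain ⟨-, -, -, hiso, hy, rfl⟩ := h
  obtain ⟨hmem | hmem, hne⟩ := (SimpleGraph.fromEdgeSet_adj _).mp hz
  · exact absurd hmem.1 (hiso z)
  · simp only [Set.mem_insert_iff, Set.mem_singleton_iff, Sym2.eq_iff] at hmem hy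
    simp only [Set.mem_insert_iff, Set.mem_singleton_iff]
    aesop

theorem adj_of_mem (h : IsDeltaY H G u v w y) {a b : V} (ha : a ∈ ({u, v, w} : Set V))
    (hb : b ∈ ({u, v, w} : Set V)) (hab : a ≠ b) : H.Adj a b := by
  obtain ⟨huv, hvw, huw, -⟩ := h
  simp only [Set.mem_insert_iff, Set.mem_singleton_iff] at ha hb
  rcases ha with rfl | rfl | rfl <;> rcases hb with rfl | rfl | rfl <;>
    first
      | exact absurd rfl hab
      | assumption
      | exact SimpleGraph.Adj.symm ‹_›

theorem adj_update [DecidableEq V] (h : IsDeltaY H G u v w y) {u₀ : V}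
    (hu₀ : u₀ ∈ ({u, v, w} : Set V)) (a b : V) (hab : G.Adj a b) :
    Function.update id y u₀ a = Function.update id y u₀ b ∨
      H.Adj (Function.update id y u₀ a) (Function.update id y u₀ b) := by
  rcases eq_or_ne a y with rfl | ha
  · rw [Function.update_self, Function.update_of_ne hab.ne.symm]
    exact or_iff_not_imp_left.mpr (h.adj_of_mem hu₀ (h.mem_of_adj hab))
  rcases eq_or_ne b y with rfl | hb
  · rw [Function.update_self, Function.update_of_ne ha]
    exact or_iff_not_imp_left.mpr (h.adj_of_mem (h.mem_of_adj hab.symm) hu₀)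
  rw [Function.update_of_ne ha, Function.update_of_ne hb]
  exact .inr (h.adj_of_ne ha hb hab)

theorem exists_contraction_target (h : IsDeltaY H G u v w y) {f : Fin 6 → Set V}
    (hf : IsMinorModel (⊤ : SimpleGraph (Fin 6)) G f) :
    ∃ u₀ ∈ ({u, v, w} : Set V), ∀ i, y ∈ f i → u₀ ∈ f i := by
  classical
  by_cases hy : ∃ i₀, y ∈ f i₀
  swap
  · simp only [not_exists] at hy
    exact ⟨u, by simp, fun i hi => absurd hi (hy i)⟩
  obtain ⟨i₀, hyi₀⟩ := hy
  have hunique : ∀ i, y ∈ f i → i = i₀ := fun i hi =>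
    by_contra fun hne => Set.disjoint_left.mp (hf.pairwise_disjoint hne) hi hyi₀
  by_cases hsub : f i₀ ⊆ {y}
  · have hcard := hf.card_le_of_subset_singleton hsub (N := {u, v, w}) fun z hz => by
      simpa using h.mem_of_adj hz
    have : ({u, v, w} : Finset V).card ≤ 3 := Finset.card_le_three
    simp only [Fintype.card_fin] at hcard
    omega
  obtain ⟨a, ha, hay⟩ := Set.not_subset.mp hsub
  obtain ⟨z, hz, hyz⟩ := exists_adj_of_connected_induce (hf.connected i₀) hyi₀ ha hay
  exact ⟨z, h.mem_of_adj hyz, fun i hi => hunique i hi ▸ hz⟩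

end IsDeltaY

/-- A ΔY-transformation cannot create a K₆-minor. -/
theorem stmt13 {V : Type*} (H G : SimpleGraph V) (u v w y : V)
    (h : IsDeltaY H G u v w y) (hG : HasK6Minor G) : HasK6Minor H := by
  classical
  obtain ⟨f, hf⟩ := isMinorOf_iff_exists_isMinorModel.mp hG
  obtain ⟨u₀, hu₀, hmem⟩ := h.exists_contraction_target hf
  have hsub i : Function.update id y u₀ '' f i ⊆ f i := image_update_id_subset (hmem i)
  refine isMinorOf_iff_exists_isMinorModel.mpr ⟨_, hf.image (h.adj_update hu₀) ?_⟩
  exact fun i j hij => (hf.pairwise_disjoint hij).mono (hsub i) (hsub j)
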